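/- arXiv:1912.02051 — 3 statements merged into one kernel-verified Lean document; each statement's English description precedes it below -/
import Mathlib

section
/- Let X and Y be finite sets, let P_X, Q_X be probability mass functions on X and P_Y, Q_Y probability mass functions on Y. Then for any coupling Q_{XY} of (Q_X, Q_Y) there exists a coupling P_{XY} of (P_X, P_Y) such that the total variation distance satisfies ‖P_{XY} − Q_{XY}‖_TV ≤ ‖P_X − Q_X‖_TV + ‖P_Y − Q_Y‖_TV. -/
open Finset

/-- `p` is a probability mass function on a finite set. -/
def IsPMF {X : Type*} [Fintype X] (p : X → ℝ) : Prop :=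
  (∀ x, 0 ≤ p x) ∧ ∑ x, p x = 1

/-- `π` is a coupling of the probability mass functions `pX` and `pY`. -/
def IsCoupling {X Y : Type*} [Fintype X] [Fintype Y]
    (pX : X → ℝ) (pY : Y → ℝ) (π : X × Y → ℝ) : Prop :=
  IsPMF π ∧ (∀ x, ∑ y, π (x, y) = pX x) ∧ (∀ y, ∑ x, π (x, y) = pY y)

/-- for any coupling `qXY` of `(qX, qY)` there is a coupling `pXY` of
`(pX, pY)` with `‖pXY − qXY‖_TV ≤ ‖pX − qX‖_TV + ‖pY − qY‖_TV`, where total variation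
distance is half the ℓ¹ distance. -/
theorem stmt3 {X Y : Type*} [Fintype X] [Fintype Y]
    (pX qX : X → ℝ) (pY qY : Y → ℝ)
    (hpX : IsPMF pX) (hqX : IsPMF qX) (hpY : IsPMF pY) (hqY : IsPMF qY)
    (qXY : X × Y → ℝ) (hq : IsCoupling qX qY qXY) :
    ∃ pXY : X × Y → ℝ, IsCoupling pX pY pXY ∧
      (1 / 2) * ∑ z, |pXY z - qXY z| ≤
        (1 / 2) * ∑ x, |pX x - qX x| + (1 / 2) * ∑ y, |pY y - qY y| := by
  obtain ⟨⟨hq0, hq1⟩, hqmX, hqmY⟩ := hq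
  obtain ⟨hpX0, hpX1⟩ := hpX
  obtain ⟨hqX0, hqX1⟩ := hqX
  obtain ⟨hpY0, hpY1⟩ := hpY
  obtain ⟨hqY0, hqY1⟩ := hqY
  set f : X → ℝ := fun x => if qX x = 0 then 0 else min (pX x) (qX x) / qX x with hfdef
  set g : Y → ℝ := fun y => if qY y = 0 then 0 else min (pY y) (qY y) / qY y with hgdef
  have hf0 : ∀ x, 0 ≤ f x := by
    intro x; simp only [hfdef]
    split
    · exact le_refl 0
    · exact div_nonneg (le_min (hpX0 x) (hqX0 x)) (hqX0 x)
  have hg0 : ∀ y, 0 ≤ g y := by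
    intro y; simp only [hgdef]
    split
    · exact le_refl 0
    · exact div_nonneg (le_min (hpY0 y) (hqY0 y)) (hqY0 y)
  have hf1 : ∀ x, f x ≤ 1 := by
    intro x; simp only [hfdef]
    split
    · exact zero_le_one
    · exact (div_le_one (lt_of_le_of_ne (hqX0 x) (Ne.symm (by assumption)))).mpr
        (min_le_right _ _)
  have hg1 : ∀ y, g y ≤ 1 := by
    intro y; simp only [hgdef]
    split
    · exact zero_le_one
    · exact (div_le_one (lt_of_le_of_ne (hqY0 y) (Ne.symm (by assumption)))).mpr
        (min_le_right _ _)
  have hfq : ∀ x, f x * qX x = min (pX x) (qX x) := by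
    intro x; simp only [hfdef]
    split
    · rename_i h
      rw [h, min_eq_right (hpX0 x)]; ring
    · exact div_mul_cancel₀ _ (by assumption)
  have hgq : ∀ y, g y * qY y = min (pY y) (qY y) := by
    intro y; simp only [hgdef]
    split
    · rename_i h
      rw [h, min_eq_right (hpY0 y)]; ring
    · exact div_mul_cancel₀ _ (by assumption)
  set m : X × Y → ℝ := fun z => qXY z * (f z.1 * g z.2) with hmdef
  have hm0 : ∀ z, 0 ≤ m z := fun z =>
    mul_nonneg (hq0 z) (mul_nonneg (hf0 z.1) (hg0 z.2))
  have hmq : ∀ z, m z ≤ qXY z := by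
    intro z
    have h : f z.1 * g z.2 ≤ 1 := mul_le_one₀ (hf1 z.1) (hg0 z.2) (hg1 z.2)
    calc m z = qXY z * (f z.1 * g z.2) := rfl
      _ ≤ qXY z * 1 := mul_le_mul_of_nonneg_left h (hq0 z)
      _ = qXY z := mul_one _
  set mX : X → ℝ := fun x => ∑ y, m (x, y) with hmXdef
  set mY : Y → ℝ := fun y => ∑ x, m (x, y) with hmYdef
  have hmXle : ∀ x, mX x ≤ min (pX x) (qX x) := by
    intro x
    calc mX x = ∑ y, qXY (x, y) * (f x * g y) := rfl
      _ ≤ ∑ y, qXY (x, y) * f x := by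
          apply Finset.sum_le_sum
          intro y _
          have : f x * g y ≤ f x := mul_le_of_le_one_right (hf0 x) (hg1 y)
          exact mul_le_mul_of_nonneg_left this (hq0 (x, y))
      _ = (∑ y, qXY (x, y)) * f x := by rw [Finset.sum_mul]
      _ = min (pX x) (qX x) := by rw [hqmX x, mul_comm, hfq x]
  have hmYle : ∀ y, mY y ≤ min (pY y) (qY y) := by
    intro y
    calc mY y = ∑ x, qXY (x, y) * (f x * g y) := rfl
      _ ≤ ∑ x, qXY (x, y) * g y := by
          apply Finset.sum_le_sum
          intro x _
          have : f x * g y ≤ g y := mul_le_of_le_one_left (hg0 y) (hf1 x)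
          exact mul_le_mul_of_nonneg_left this (hq0 (x, y))
      _ = (∑ x, qXY (x, y)) * g y := by rw [Finset.sum_mul]
      _ = min (pY y) (qY y) := by rw [hqmY y, mul_comm, hgq y]
  set M : ℝ := ∑ z, m z with hMdef
  have hMX : ∑ x, mX x = M := (Fintype.sum_prod_type m).symm
  have hMY : ∑ y, mY y = M := (Fintype.sum_prod_type_right m).symm
  have hM1 : M ≤ 1 := by
    rw [hMdef, ← hq1]
    exact Finset.sum_le_sum fun z _ => hmq z
  set SX : ℝ := ∑ x, min (pX x) (qX x) with hSXdef
  set SY : ℝ := ∑ y, min (pY y) (qY y) with hSYdef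
  -- lower bound on M
  have hSXsum : ∑ z : X × Y, qXY z * f z.1 = SX := by
    rw [Fintype.sum_prod_type, hSXdef]
    apply Finset.sum_congr rfl
    intro x _
    calc ∑ y, qXY (x, y) * f (x, y).1 = ∑ y, qXY (x, y) * f x := rfl
      _ = (∑ y, qXY (x, y)) * f x := by rw [Finset.sum_mul]
      _ = min (pX x) (qX x) := by rw [hqmX x, mul_comm, hfq x]
  have hSYsum : ∑ z : X × Y, qXY z * g z.2 = SY := by
    rw [Fintype.sum_prod_type_right, hSYdef]
    apply Finset.sum_congr rfl
    intro y _
    calc ∑ x, qXY (x, y) * g (x, y).2 = ∑ x, qXY (x, y) * g y := rfl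
      _ = (∑ x, qXY (x, y)) * g y := by rw [Finset.sum_mul]
      _ = min (pY y) (qY y) := by rw [hqmY y, mul_comm, hgq y]
  have hMlb : SX + SY - 1 ≤ M := by
    have hpt : ∀ z : X × Y, qXY z * f z.1 + qXY z * g z.2 - qXY z ≤ m z := by
      intro z
      have key : 0 ≤ qXY z * ((1 - f z.1) * (1 - g z.2)) :=
        mul_nonneg (hq0 z)
          (mul_nonneg (by linarith [hf1 z.1]) (by linarith [hg1 z.2]))
      show qXY z * f z.1 + qXY z * g z.2 - qXY z ≤ qXY z * (f z.1 * g z.2)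
      nlinarith [key]
    have := Finset.sum_le_sum (fun z (_ : z ∈ Finset.univ) => hpt z)
    rw [Finset.sum_sub_distrib, Finset.sum_add_distrib, hSXsum, hSYsum, hq1] at this
    linarith [this]
  -- ℓ¹ identities
  have habs : ∀ a b : ℝ, |a - b| = a + b - 2 * min a b := by
    intro a b
    rcases le_total a b with h | h
    · rw [abs_of_nonpos (by linarith), min_eq_left h]; ring
    · rw [abs_of_nonneg (by linarith), min_eq_right h]; ring
  have hX1 : ∑ x, |pX x - qX x| = 2 - 2 * SX := by
    calc ∑ x, |pX x - qX x| = ∑ x, (pX x + qX x - 2 * min (pX x) (qX x)) := by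
          exact Finset.sum_congr rfl fun x _ => habs (pX x) (qX x)
      _ = (∑ x, pX x) + (∑ x, qX x) - 2 * SX := by
          rw [Finset.sum_sub_distrib, Finset.sum_add_distrib, hSXdef, Finset.mul_sum]
      _ = 2 - 2 * SX := by rw [hpX1, hqX1]; ring
  have hY1 : ∑ y, |pY y - qY y| = 2 - 2 * SY := by
    calc ∑ y, |pY y - qY y| = ∑ y, (pY y + qY y - 2 * min (pY y) (qY y)) := by
          exact Finset.sum_congr rfl fun y _ => habs (pY y) (qY y)
      _ = (∑ y, pY y) + (∑ y, qY y) - 2 * SY := by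
          rw [Finset.sum_sub_distrib, Finset.sum_add_distrib, hSYdef, Finset.mul_sum]
      _ = 2 - 2 * SY := by rw [hpY1, hqY1]; ring
  -- deficits
  set dX : X → ℝ := fun x => pX x - mX x with hdXdef
  set dY : Y → ℝ := fun y => pY y - mY y with hdYdef
  have hdX0 : ∀ x, 0 ≤ dX x := fun x => by
    have h1 := hmXle x
    have h2 := min_le_left (pX x) (qX x)
    show 0 ≤ pX x - mX x
    linarith
  have hdY0 : ∀ y, 0 ≤ dY y := fun y => by
    have h1 := hmYle y
    have h2 := min_le_left (pY y) (qY y)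
    show 0 ≤ pY y - mY y
    linarith
  have hdXsum : ∑ x, dX x = 1 - M := by
    show ∑ x, (pX x - mX x) = 1 - M
    rw [Finset.sum_sub_distrib, hpX1, hMX]
  have hdYsum : ∑ y, dY y = 1 - M := by
    show ∑ y, (pY y - mY y) = 1 - M
    rw [Finset.sum_sub_distrib, hpY1, hMY]
  set c : ℝ := (1 - M)⁻¹ with hcdef
  have hc0 : 0 ≤ c := inv_nonneg.mpr (by linarith)
  have hdXzero : M = 1 → ∀ x, dX x = 0 := by
    intro h x
    have hs : ∑ x, dX x = 0 := by rw [hdXsum, h]; ring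
    exact (Finset.sum_eq_zero_iff_of_nonneg fun x _ => hdX0 x).mp hs x (mem_univ x)
  have hdYzero : M = 1 → ∀ y, dY y = 0 := by
    intro h y
    have hs : ∑ y, dY y = 0 := by rw [hdYsum, h]; ring
    exact (Finset.sum_eq_zero_iff_of_nonneg fun y _ => hdY0 y).mp hs y (mem_univ y)
  have hcancX : ∀ x, dX x * ((1 - M) * c) = dX x := by
    intro x
    rcases eq_or_lt_of_le hM1 with h | h
    · rw [hdXzero h x]; ring
    · rw [hcdef, mul_inv_cancel₀ (by linarith : (1 : ℝ) - M ≠ 0), mul_one]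
  have hcancY : ∀ y, dY y * ((1 - M) * c) = dY y := by
    intro y
    rcases eq_or_lt_of_le hM1 with h | h
    · rw [hdYzero h y]; ring
    · rw [hcdef, mul_inv_cancel₀ (by linarith : (1 : ℝ) - M ≠ 0), mul_one]
  have hMc1 : (1 - M) * c ≤ 1 := by
    rcases eq_or_lt_of_le hM1 with h | h
    · rw [h]; norm_num
    · rw [hcdef, mul_inv_cancel₀ (by linarith : (1 : ℝ) - M ≠ 0)]
  -- row sums of the new coupling
  have hrow : ∀ x, ∑ y, (m (x, y) + dX x * dY y * c) = pX x := by
    intro x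
    rw [Finset.sum_add_distrib]
    have h2 : ∑ y, dX x * dY y * c = dX x * ((1 - M) * c) := by
      rw [← Finset.sum_mul, ← Finset.mul_sum, hdYsum]; ring
    rw [h2, hcancX x]
    show mX x + dX x = pX x
    show mX x + (pX x - mX x) = pX x
    ring
  have hcol : ∀ y, ∑ x, (m (x, y) + dX x * dY y * c) = pY y := by
    intro y
    rw [Finset.sum_add_distrib]
    have h2 : ∑ x, dX x * dY y * c = dY y * ((1 - M) * c) := by
      rw [← Finset.sum_mul,
        show (∑ x, dX x * dY y) = (∑ x, dX x) * dY y from (Finset.sum_mul ..).symm,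
        hdXsum]
      ring
    rw [h2, hcancY y]
    show mY y + dY y = pY y
    show mY y + (pY y - mY y) = pY y
    ring
  -- the coupling
  refine ⟨fun z => m z + dX z.1 * dY z.2 * c, ⟨⟨?_, ?_⟩, ?_, ?_⟩, ?_⟩
  · intro z
    have h1 := hm0 z
    have h2 := mul_nonneg (mul_nonneg (hdX0 z.1) (hdY0 z.2)) hc0
    dsimp only
    linarith
  · rw [Fintype.sum_prod_type]
    dsimp only
    rw [Finset.sum_congr rfl fun x _ => hrow x, hpX1]
  · intro x
    dsimp only
    exact hrow x
  · intro y
    dsimp only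
    exact hcol y
  · -- the TV bound
    have hpt : ∀ z : X × Y, |m z + dX z.1 * dY z.2 * c - qXY z| ≤
        (qXY z - m z) + dX z.1 * dY z.2 * c := by
      intro z
      have h1 : |m z - qXY z| = qXY z - m z := by
        rw [abs_of_nonpos (by linarith [hmq z])]; ring
      calc |m z + dX z.1 * dY z.2 * c - qXY z|
          = |(m z - qXY z) + dX z.1 * dY z.2 * c| := by ring_nf
        _ ≤ |m z - qXY z| + |dX z.1 * dY z.2 * c| := abs_add_le _ _
        _ = (qXY z - m z) + dX z.1 * dY z.2 * c := by
            rw [h1, abs_of_nonneg (mul_nonneg (mul_nonneg (hdX0 z.1) (hdY0 z.2)) hc0)]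
    have hsum1 : ∑ z : X × Y, (qXY z - m z) = 1 - M := by
      rw [Finset.sum_sub_distrib, hq1, hMdef]
    have hsum2 : ∑ z : X × Y, dX z.1 * dY z.2 * c = (1 - M) * ((1 - M) * c) := by
      rw [Fintype.sum_prod_type]
      dsimp only
      have hin : ∀ x, ∑ y, dX x * dY y * c = dX x * ((1 - M) * c) := by
        intro x
        rw [← Finset.sum_mul, ← Finset.mul_sum, hdYsum]; ring
      rw [Finset.sum_congr rfl fun x _ => hin x, ← Finset.sum_mul, hdXsum]
    have hsum2le : ∑ z : X × Y, dX z.1 * dY z.2 * c ≤ 1 - M := by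
      rw [hsum2]
      nlinarith [hMc1, hM1]
    have htot : ∑ z : X × Y, |m z + dX z.1 * dY z.2 * c - qXY z| ≤ 2 * (1 - M) := by
      calc ∑ z : X × Y, |m z + dX z.1 * dY z.2 * c - qXY z|
          ≤ ∑ z : X × Y, ((qXY z - m z) + dX z.1 * dY z.2 * c) :=
            Finset.sum_le_sum fun z _ => hpt z
        _ = (1 - M) + ∑ z : X × Y, dX z.1 * dY z.2 * c := by
            rw [Finset.sum_add_distrib, hsum1]
        _ ≤ 2 * (1 - M) := by linarith [hsum2le]
    rw [hX1, hY1]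
    dsimp only
    linarith [htot, hMlb]
end

section
/- Let X and Y be finite sets and c : X × Y → ℝ≥0 a bounded cost function with c_max := max_{x,y} c(x,y). Then the optimal transport functional E is uniformly continuous with respect to total variation: for all probability mass functions P_X, Q_X on X and P_Y, Q_Y on Y, |E(P_X, P_Y) − E(Q_X, Q_Y)| ≤ c_max · (‖P_X − Q_X‖_TV + ‖P_Y − Q_Y‖_TV). -/
open Finset

/-- The optimal transport cost between two probability mass functions. -/
noncomputable def OTCost {X Y : Type*} [Fintype X] [Fintype Y]
    (c : X × Y → ℝ) (pX : X → ℝ) (pY : Y → ℝ) : ℝ :=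
  sInf {r | ∃ π, IsCoupling pX pY π ∧ r = ∑ z, π z * c z}

/-!
Given a coupling `π` of `(Q_X, Q_Y)`, rescale `π (x, y)` by `r x * s y`, where
`r = min P_X Q_X / Q_X` and `s = min P_Y Q_Y / Q_Y`. Since `1 - r s ≤ (1 - r) + (1 - s)`,
this is a sub-coupling of `(P_X, P_Y)` missing at most `‖P_X - Q_X‖_TV + ‖P_Y - Q_Y‖_TV`
of mass, and adding the normalised product of its missing marginals completes it to a
coupling of `(P_X, P_Y)` at extra cost at most `c_max` per unit of missing mass. Hence
`E(P_X, P_Y) ≤ E(Q_X, Q_Y) + c_max (‖P_X - Q_X‖_TV + ‖P_Y - Q_Y‖_TV)`, and symmetrically.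
-/

section Couplings

variable {X Y : Type*} [Fintype X] [Fintype Y]

lemma IsPMF.nonempty {p : X → ℝ} (hp : IsPMF p) : Nonempty X := by
  by_contra h
  rw [not_nonempty_iff] at h
  simpa using hp.2

lemma IsPMF.sum_sub_min_eq_half_sum_abs_sub {p q : X → ℝ} (hp : IsPMF p) (hq : IsPMF q) :
    ∑ x, (q x - min (p x) (q x)) = (1 / 2) * ∑ x, |p x - q x| := by
  have hpoint : ∀ x, q x - min (p x) (q x) = (1 / 2) * (|p x - q x| + (q x - p x)) := by
    intro x
    rcases le_total (p x) (q x) with h | h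
    · rw [min_eq_left h, abs_of_nonpos (by linarith)]; ring
    · rw [min_eq_right h, abs_of_nonneg (by linarith)]; ring
  simp only [hpoint, ← mul_sum, sum_add_distrib, sum_sub_distrib, hp.2, hq.2, sub_self,
    add_zero]

lemma isCoupling_of_marginals {p : X → ℝ} {q : Y → ℝ} {π : X × Y → ℝ} (hp : IsPMF p)
    (hπ : ∀ z, 0 ≤ π z) (hrow : ∀ x, ∑ y, π (x, y) = p x) (hcol : ∀ y, ∑ x, π (x, y) = q y) :
    IsCoupling p q π :=
  ⟨⟨hπ, by rw [Fintype.sum_prod_type]; simp only [hrow, hp.2]⟩, hrow, hcol⟩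

lemma isCoupling_prod {p : X → ℝ} {q : Y → ℝ} (hp : IsPMF p) (hq : IsPMF q) :
    IsCoupling p q (fun z => p z.1 * q z.2) :=
  isCoupling_of_marginals hp (fun z => mul_nonneg (hp.1 z.1) (hq.1 z.2))
    (fun x => by dsimp only; rw [← mul_sum, hq.2, mul_one])
    (fun y => by dsimp only; rw [← sum_mul, hp.2, one_mul])

lemma mul_sum_div_sum_self {a : X → ℝ} (ha : ∀ x, 0 ≤ a x) (x : X) :
    a x * (∑ x', a x') / ∑ x', a x' = a x := by
  rcases eq_or_ne (∑ x', a x') 0 with h | h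
  · rw [(sum_eq_zero_iff_of_nonneg fun x' _ => ha x').1 h x (mem_univ x)]
    simp
  · field_simp

lemma exists_isCoupling_cost_le_of_le_marginals {p : X → ℝ} {q : Y → ℝ} (hp : IsPMF p)
    (hq : IsPMF q) {σ : X × Y → ℝ} (hσ : ∀ z, 0 ≤ σ z) (hrow : ∀ x, ∑ y, σ (x, y) ≤ p x)
    (hcol : ∀ y, ∑ x, σ (x, y) ≤ q y) {c : X × Y → ℝ} {cmax : ℝ} (hcmax : ∀ z, c z ≤ cmax) :
    ∃ π, IsCoupling p q π ∧ ∑ z, π z * c z ≤ ∑ z, σ z * c z + cmax * (1 - ∑ z, σ z) := by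
  set a : X → ℝ := fun x => p x - ∑ y, σ (x, y)
  set b : Y → ℝ := fun y => q y - ∑ x, σ (x, y)
  have ha : ∀ x, 0 ≤ a x := fun x => sub_nonneg.2 (hrow x)
  have hb : ∀ y, 0 ≤ b y := fun y => sub_nonneg.2 (hcol y)
  have hsum_a : ∑ x, a x = 1 - ∑ z, σ z := by
    simp only [a, sum_sub_distrib, hp.2, Fintype.sum_prod_type]
  have hsum_b : ∑ y, b y = ∑ x, a x := by
    simp only [b, sum_sub_distrib, hq.2, hsum_a, Fintype.sum_prod_type_right]
  have hm : 0 ≤ ∑ x, a x := sum_nonneg fun x _ => ha x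
  refine ⟨fun z => σ z + a z.1 * b z.2 / ∑ x, a x, isCoupling_of_marginals hp
    (fun z => add_nonneg (hσ z) (div_nonneg (mul_nonneg (ha z.1) (hb z.2)) hm))
    (fun x => ?_) (fun y => ?_), ?_⟩
  · dsimp only
    rw [sum_add_distrib, ← sum_div, ← mul_sum, hsum_b, mul_sum_div_sum_self ha]
    exact add_sub_cancel _ _
  · dsimp only
    rw [sum_add_distrib, ← sum_div, ← sum_mul, ← hsum_b, mul_comm,
      mul_sum_div_sum_self hb]
    exact add_sub_cancel _ _
  · have hresidual : ∑ z : X × Y, a z.1 * b z.2 / (∑ x, a x) * c z ≤ cmax * ∑ x, a x :=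
      calc ∑ z : X × Y, a z.1 * b z.2 / (∑ x, a x) * c z
          ≤ ∑ z : X × Y, a z.1 * b z.2 / (∑ x, a x) * cmax :=
            sum_le_sum fun z _ => mul_le_mul_of_nonneg_left (hcmax z)
              (div_nonneg (mul_nonneg (ha z.1) (hb z.2)) hm)
        _ = cmax * ∑ x, a x := by
            rw [← sum_mul, ← sum_div, Fintype.sum_prod_type, ← sum_mul_sum, hsum_b,
              mul_self_div_self, mul_comm]
    simp only [add_mul, sum_add_distrib]
    rw [← hsum_a]
    linarith

end Couplings

section Reweighting

variable {X Y : Type*} [Fintype X] [Fintype Y] {qX : X → ℝ} {qY : Y → ℝ} {π : X × Y → ℝ}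
  {r : X → ℝ} {s : Y → ℝ}

lemma sum_reweight_row_le (hπ : IsCoupling qX qY π) (hr : ∀ x, 0 ≤ r x) (hs : ∀ y, s y ≤ 1)
    (x : X) : ∑ y, r x * s y * π (x, y) ≤ r x * qX x := by
  rw [← hπ.2.1 x, mul_sum]
  gcongr with y
  · exact hπ.1.1 _
  · exact mul_le_of_le_one_right (hr x) (hs y)

lemma sum_reweight_col_le (hπ : IsCoupling qX qY π) (hr : ∀ x, r x ≤ 1) (hs : ∀ y, 0 ≤ s y)
    (y : Y) : ∑ x, r x * s y * π (x, y) ≤ s y * qY y := by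
  rw [← hπ.2.2 y, mul_sum]
  gcongr with x
  · exact hπ.1.1 _
  · rw [mul_comm]; exact mul_le_of_le_one_right (hs y) (hr x)

lemma one_sub_sum_reweight_le (hπ : IsCoupling qX qY π) (hr : ∀ x, r x ≤ 1) (hs : ∀ y, s y ≤ 1) :
    1 - ∑ z, r z.1 * s z.2 * π z ≤ ∑ x, (1 - r x) * qX x + ∑ y, (1 - s y) * qY y := by
  have hsplit : ∑ x, (1 - r x) * qX x + ∑ y, (1 - s y) * qY y
      = ∑ z, ((1 - r z.1) + (1 - s z.2)) * π z := by
    simp only [add_mul, sum_add_distrib, ← hπ.2.1, ← hπ.2.2, mul_sum]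
    rw [Fintype.sum_prod_type, Fintype.sum_prod_type_right]
  have hdeficit : 1 - ∑ z, r z.1 * s z.2 * π z = ∑ z, (1 - r z.1 * s z.2) * π z := by
    simp only [sub_mul, one_mul, sum_sub_distrib, hπ.1.2]
  rw [hsplit, hdeficit]
  refine sum_le_sum fun z _ => mul_le_mul_of_nonneg_right ?_ (hπ.1.1 z)
  nlinarith [mul_nonneg (sub_nonneg.2 (hr z.1)) (sub_nonneg.2 (hs z.2))]

lemma sum_reweight_mul_le (hπ : IsCoupling qX qY π) (hr₁ : ∀ x, r x ≤ 1)
    (hs₀ : ∀ y, 0 ≤ s y) (hs₁ : ∀ y, s y ≤ 1) {c : X × Y → ℝ} (hc : ∀ z, 0 ≤ c z) :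
    ∑ z, r z.1 * s z.2 * π z * c z ≤ ∑ z, π z * c z :=
  sum_le_sum fun z _ => mul_le_mul_of_nonneg_right
    (mul_le_of_le_one_left (hπ.1.1 z) (mul_le_one₀ (hr₁ z.1) (hs₀ z.2) (hs₁ z.2))) (hc z)

end Reweighting

section MinRatio

variable {X : Type*} {p q : X → ℝ}

-- `0` where `q x = 0`, since `t / 0 = 0`.
noncomputable def minRatio (p q : X → ℝ) (x : X) : ℝ := min (p x) (q x) / q x

lemma minRatio_nonneg (hp : ∀ x, 0 ≤ p x) (hq : ∀ x, 0 ≤ q x) (x : X) : 0 ≤ minRatio p q x :=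
  div_nonneg (le_min (hp x) (hq x)) (hq x)

lemma minRatio_le_one (hq : ∀ x, 0 ≤ q x) (x : X) : minRatio p q x ≤ 1 :=
  div_le_one_of_le₀ (min_le_right _ _) (hq x)

lemma minRatio_mul (hp : ∀ x, 0 ≤ p x) (x : X) : minRatio p q x * q x = min (p x) (q x) := by
  rcases eq_or_ne (q x) 0 with h | h
  · simp [h, hp x]
  · exact div_mul_cancel₀ _ h

lemma one_sub_minRatio_mul (hp : ∀ x, 0 ≤ p x) (x : X) :
    (1 - minRatio p q x) * q x = q x - min (p x) (q x) := by
  rw [sub_mul, one_mul, minRatio_mul hp]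

end MinRatio

section OTCost

variable {X Y : Type*} [Fintype X] [Fintype Y] {c : X × Y → ℝ}

lemma OTCost_le_cost (hc : ∀ z, 0 ≤ c z) {p : X → ℝ} {q : Y → ℝ} {π : X × Y → ℝ}
    (hπ : IsCoupling p q π) : OTCost c p q ≤ ∑ z, π z * c z := by
  refine csInf_le ⟨0, ?_⟩ ⟨π, hπ, rfl⟩
  rintro _ ⟨π', hπ', rfl⟩
  exact sum_nonneg fun z _ => mul_nonneg (hπ'.1.1 z) (hc z)

lemma le_OTCost {p : X → ℝ} {q : Y → ℝ} (hp : IsPMF p) (hq : IsPMF q) {t : ℝ}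
    (h : ∀ π, IsCoupling p q π → t ≤ ∑ z, π z * c z) : t ≤ OTCost c p q := by
  refine le_csInf ⟨_, _, isCoupling_prod hp hq, rfl⟩ ?_
  rintro _ ⟨π, hπ, rfl⟩
  exact h π hπ

theorem OTCost_le_add (hc : ∀ z, 0 ≤ c z) {cmax : ℝ} (hcmax : ∀ z, c z ≤ cmax)
    (hcmax₀ : 0 ≤ cmax) {pX qX : X → ℝ} {pY qY : Y → ℝ}
    (hpX : IsPMF pX) (hqX : IsPMF qX) (hpY : IsPMF pY) (hqY : IsPMF qY) :
    OTCost c pX pY ≤ OTCost c qX qY +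
      cmax * (∑ x, (qX x - min (pX x) (qX x)) + ∑ y, (qY y - min (pY y) (qY y))) := by
  rw [← sub_le_iff_le_add]
  refine le_OTCost hqX hqY fun π hπ => ?_
  set r := minRatio pX qX
  set s := minRatio pY qY
  have hr₀ := minRatio_nonneg hpX.1 hqX.1
  have hr₁ := minRatio_le_one (p := pX) hqX.1
  have hs₀ := minRatio_nonneg hpY.1 hqY.1
  have hs₁ := minRatio_le_one (p := pY) hqY.1
  obtain ⟨π', hπ', hcost⟩ := exists_isCoupling_cost_le_of_le_marginals
    (σ := fun z => r z.1 * s z.2 * π z) hpX hpY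
    (fun z => mul_nonneg (mul_nonneg (hr₀ z.1) (hs₀ z.2)) (hπ.1.1 z))
    (fun x => (sum_reweight_row_le hπ hr₀ hs₁ x).trans
      ((minRatio_mul hpX.1 x).trans_le (min_le_left _ _)))
    (fun y => (sum_reweight_col_le hπ hr₁ hs₀ y).trans
      ((minRatio_mul hpY.1 y).trans_le (min_le_left _ _)))
    hcmax
  have hdeficit := one_sub_sum_reweight_le hπ hr₁ hs₁
  simp only [one_sub_minRatio_mul hpX.1, one_sub_minRatio_mul hpY.1] at hdeficit
  have hOT := OTCost_le_cost hc hπ'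
  have hσ_cost := sum_reweight_mul_le hπ hr₁ hs₀ hs₁ hc
  have hextra := mul_le_mul_of_nonneg_left hdeficit hcmax₀
  linarith

end OTCost

theorem stmt5_general {X Y : Type*} [Fintype X] [Fintype Y]
    (c : X × Y → ℝ) (hc : ∀ z, 0 ≤ c z)
    (cmax : ℝ) (hcmax : cmax = ⨆ z : X × Y, c z)
    (pX qX : X → ℝ) (pY qY : Y → ℝ)
    (hpX : IsPMF pX) (hqX : IsPMF qX) (hpY : IsPMF pY) (hqY : IsPMF qY) :
    |OTCost c pX pY - OTCost c qX qY| ≤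
      cmax * ((1 / 2) * ∑ x, |pX x - qX x| + (1 / 2) * ∑ y, |pY y - qY y|) := by
  have hc_le : ∀ z, c z ≤ cmax := fun z => hcmax ▸ le_ciSup (Finite.bddAbove_range c) z
  have : Nonempty X := hpX.nonempty
  have : Nonempty Y := hpY.nonempty
  have hcmax₀ : 0 ≤ cmax := (hc (Classical.arbitrary _)).trans (hc_le _)
  have hPQ := OTCost_le_add hc hc_le hcmax₀ hpX hqX hpY hqY
  have hQP := OTCost_le_add hc hc_le hcmax₀ hqX hpX hqY hpY
  rw [hpX.sum_sub_min_eq_half_sum_abs_sub hqX, hpY.sum_sub_min_eq_half_sum_abs_sub hqY] at hPQ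
  rw [hqX.sum_sub_min_eq_half_sum_abs_sub hpX, hqY.sum_sub_min_eq_half_sum_abs_sub hpY] at hQP
  simp only [abs_sub_comm (qX _), abs_sub_comm (qY _)] at hQP
  rw [abs_sub_le_iff]
  constructor <;> linarith

/-- with `c_max := max_{x,y} c(x,y)`, the OT functional is uniformly
continuous in total variation:
`|E(P_X,P_Y) − E(Q_X,Q_Y)| ≤ c_max (‖P_X − Q_X‖_TV + ‖P_Y − Q_Y‖_TV)`. -/
theorem stmt5 {X Y : Type*} [Fintype X] [Fintype Y] [Nonempty X] [Nonempty Y]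
    (c : X × Y → ℝ) (hc : ∀ z, 0 ≤ c z)
    (cmax : ℝ) (hcmax : cmax = ⨆ z : X × Y, c z)
    (pX qX : X → ℝ) (pY qY : Y → ℝ)
    (hpX : IsPMF pX) (hqX : IsPMF qX) (hpY : IsPMF pY) (hqY : IsPMF qY) :
    |OTCost c pX pY - OTCost c qX qY| ≤
      cmax * ((1 / 2) * ∑ x, |pX x - qX x| + (1 / 2) * ∑ y, |pY y - qY y|) :=
  stmt5_general c hc cmax hcmax pX qX pY qY hpX hqX hpY hqY
end

section
/- Under the setup of the function θ (finite alphabets, finite cost c, α = E(P_X,P_Y), S the union of supports of optimal couplings of (P_X,P_Y)): for any pair of probability mass functions (Q_X, Q_Y) and any a > 0, setting β_X := (Q_X − P_X)/a and β_Y := (Q_Y − P_Y)/a, one has (E(Q_X, Q_Y) − α)/a ≥ θ(β_X, β_Y). -/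
open Finset

/-!
The point is that the infimum defining `θ` is over a set bounded below (else `sInf` would be the
junk value `0`). Take an optimal coupling `π₀` that is positive on all of `S`. If a signed plan `β`
is negative only on `S`, then for small `t > 0` the plan `π₀ + t β` is nonnegative, with marginals
`(P_X + t β_X, P_Y + t β_Y)`. The optimal cost is Lipschitz in total variation: excess mass is
re-routed at a cost of at most `max c` per unit. Hence
`α ≤ α + t ∑ β c + t max c (‖β_X⁻‖₁ + ‖β_Y⁻‖₁)`, which bounds `∑ β c` from below.
Given this bound, every coupling `π_Q` of `(Q_X, Q_Y)` yields the admissible plan `(π_Q − π₀) / a`,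
whose cost is `(∑ π_Q c − α) / a`.
-/

open Topology

lemma exists_pos_forall_add_mul_nonneg {ι : Type*} [Finite ι] {u v : ι → ℝ}
    (hu : ∀ i, 0 ≤ u i) (huv : ∀ i, v i < 0 → 0 < u i) :
    ∃ t > 0, ∀ i, 0 ≤ u i + t * v i := by
  have h : ∀ᶠ t in 𝓝[>] (0 : ℝ), ∀ i, 0 ≤ u i + t * v i := by
    refine Filter.eventually_all.2 fun i => ?_
    by_cases hv : v i < 0
    · have hlim : Filter.Tendsto (fun t => u i + t * v i) (𝓝[>] 0) (𝓝 (u i)) :=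
        tendsto_nhdsWithin_of_tendsto_nhds
          ((by fun_prop : Continuous fun t => u i + t * v i).tendsto' 0 (u i) (by simp))
      exact (hlim.eventually (lt_mem_nhds (huv i hv))).mono fun _ ht => ht.le
    · filter_upwards [self_mem_nhdsWithin] with t ht
      exact add_nonneg (hu i) (mul_nonneg (le_of_lt ht) (not_lt.1 hv))
  obtain ⟨t, ht, htpos⟩ := (h.and self_mem_nhdsWithin).exists
  exact ⟨t, htpos, ht⟩

lemma exists_le_fst_marginal_eq_min {X Y : Type*} [Fintype Y] {γ : X × Y → ℝ}
    (hγ : ∀ z, 0 ≤ γ z) {p : X → ℝ} (hp : ∀ x, 0 ≤ p x) :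
    ∃ τ : X × Y → ℝ, (∀ z, 0 ≤ τ z ∧ τ z ≤ γ z) ∧
      ∀ x, ∑ y, τ (x, y) = min (∑ y, γ (x, y)) (p x) := by
  have hμ (x : X) : 0 ≤ ∑ y, γ (x, y) := sum_nonneg fun y _ => hγ (x, y)
  refine ⟨fun z => γ z * (min (∑ y, γ (z.1, y)) (p z.1) / ∑ y, γ (z.1, y)),
    fun z => ⟨?_, ?_⟩, fun x => ?_⟩
  · exact mul_nonneg (hγ z) (div_nonneg (le_min (hμ _) (hp _)) (hμ _))
  · exact mul_le_of_le_one_right (hγ z) (div_le_one_of_le₀ (min_le_left _ _) (hμ _))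
  · dsimp only
    rw [← sum_mul]
    rcases (hμ x).eq_or_lt with h | h
    · rw [← h, zero_mul, min_eq_left (hp x)]
    · exact mul_div_cancel₀ _ h.ne'

section Plans

variable {X Y : Type*} [Fintype X] [Fintype Y] {c : X × Y → ℝ} {M : ℝ}

lemma exists_plan_of_sum_eq (hM : ∀ z, c z ≤ M) {e : X → ℝ} {f : Y → ℝ}
    (he : ∀ x, 0 ≤ e x) (hf : ∀ y, 0 ≤ f y) (hef : ∑ x, e x = ∑ y, f y) :
    ∃ ρ : X × Y → ℝ, (∀ z, 0 ≤ ρ z) ∧ (∀ x, ∑ y, ρ (x, y) = e x) ∧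
      (∀ y, ∑ x, ρ (x, y) = f y) ∧ ∑ z, ρ z * c z ≤ M * ∑ x, e x := by
  set δ := ∑ x, e x
  -- `δ = 0` forces `e = 0` and `f = 0`, so the junk value `0 / 0 = 0` is harmless.
  have cancel {a : ℝ} (ha : δ = 0 → a = 0) : a * δ / δ = a := by
    by_cases hδ : δ = 0
    · simp [ha hδ]
    · exact mul_div_cancel_right₀ a hδ
  refine ⟨fun z => e z.1 * f z.2 / δ, fun z => ?_, fun x => ?_, fun y => ?_, ?_⟩
  · exact div_nonneg (mul_nonneg (he _) (hf _)) (sum_nonneg fun x _ => he x)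
  · dsimp only
    rw [← sum_div, ← mul_sum, ← hef]
    exact cancel fun hδ => (sum_eq_zero_iff_of_nonneg fun x _ => he x).1 hδ x (mem_univ x)
  · dsimp only
    rw [← sum_div, ← sum_mul, mul_comm]
    exact cancel fun hδ => (sum_eq_zero_iff_of_nonneg fun y _ => hf y).1 (hef ▸ hδ) y (mem_univ y)
  · calc ∑ z, e z.1 * f z.2 / δ * c z ≤ ∑ z, e z.1 * f z.2 / δ * M :=
          sum_le_sum fun z _ => mul_le_mul_of_nonneg_left (hM z)
            (div_nonneg (mul_nonneg (he _) (hf _)) (sum_nonneg fun x _ => he x))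
      _ = M * (δ * δ / δ) := by
          simp_rw [← sum_mul, Fintype.sum_prod_type, ← sum_div, ← mul_sum, ← sum_mul, ← hef]
          ring
      _ = M * δ := by rw [mul_self_div_self]

lemma exists_fst_marginal_eq_sum_mul_le (hc : ∀ z, 0 ≤ c z) (hM : ∀ z, c z ≤ M)
    {γ : X × Y → ℝ} (hγ : ∀ z, 0 ≤ γ z) {p : X → ℝ} (hp : ∀ x, 0 ≤ p x)
    (hmass : ∑ x, p x = ∑ z, γ z) :
    ∃ γ' : X × Y → ℝ, (∀ z, 0 ≤ γ' z) ∧ (∀ x, ∑ y, γ' (x, y) = p x) ∧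
      (∀ y, ∑ x, γ' (x, y) = ∑ x, γ (x, y)) ∧
      ∑ z, γ' z * c z ≤ ∑ z, γ z * c z + M * ∑ x, (p x - ∑ y, γ (x, y))⁺ := by
  -- Keep `τ ≤ γ` with row sums `min μ p` (`μ` the row sums of `γ`), then route the deficit
  -- `(p - μ)⁺` of the rows against the mass `γ - τ` freed in the columns.
  obtain ⟨τ, hτ, hτX⟩ := exists_le_fst_marginal_eq_min hγ hp
  have hmin (x : X) : min (∑ y, γ (x, y)) (p x) + (p x - ∑ y, γ (x, y))⁺ = p x := by
    rw [posPart_def]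
    rcases le_total (∑ y, γ (x, y)) (p x) with h | h
    · rw [min_eq_left h, max_eq_left (sub_nonneg.2 h)]; ring
    · rw [min_eq_right h, max_eq_right (sub_nonpos.2 h)]; ring
  have hexcess : ∑ x, (p x - ∑ y, γ (x, y))⁺ = ∑ y, ∑ x, (γ (x, y) - τ (x, y)) := by
    have := sum_congr rfl fun x (_ : x ∈ univ) => hmin x
    simp only [sum_add_distrib, ← hτX, ← Fintype.sum_prod_type] at this
    simp only [sum_sub_distrib, ← Fintype.sum_prod_type_right]
    linarith
  obtain ⟨ρ, hρ, hρX, hρY, hρc⟩ := exists_plan_of_sum_eq hM (fun x => posPart_nonneg _)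
    (fun y => sum_nonneg fun x _ => sub_nonneg.2 (hτ (x, y)).2) hexcess
  refine ⟨τ + ρ, fun z => add_nonneg (hτ z).1 (hρ z), fun x => ?_, fun y => ?_, ?_⟩
  · simp only [Pi.add_apply, sum_add_distrib, hτX, hρX, hmin]
  · simp only [Pi.add_apply, sum_add_distrib, hρY, sum_sub_distrib]
    ring
  · have hτc : ∑ z, τ z * c z ≤ ∑ z, γ z * c z :=
      sum_le_sum fun z _ => mul_le_mul_of_nonneg_right (hτ z).2 (hc z)
    simp only [Pi.add_apply, add_mul, sum_add_distrib]
    linarith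

lemma exists_snd_marginal_eq_sum_mul_le (hc : ∀ z, 0 ≤ c z) (hM : ∀ z, c z ≤ M)
    {γ : X × Y → ℝ} (hγ : ∀ z, 0 ≤ γ z) {q : Y → ℝ} (hq : ∀ y, 0 ≤ q y)
    (hmass : ∑ y, q y = ∑ z, γ z) :
    ∃ γ' : X × Y → ℝ, (∀ z, 0 ≤ γ' z) ∧ (∀ x, ∑ y, γ' (x, y) = ∑ y, γ (x, y)) ∧
      (∀ y, ∑ x, γ' (x, y) = q y) ∧
      ∑ z, γ' z * c z ≤ ∑ z, γ z * c z + M * ∑ y, (q y - ∑ x, γ (x, y))⁺ := by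
  have hswap (g : X × Y → ℝ) : ∑ z, g z = ∑ w : Y × X, g w.swap :=
    Fintype.sum_equiv (Equiv.prodComm X Y) _ _ fun _ => rfl
  obtain ⟨γ', hγ', hγ'Y, hγ'X, hγ'c⟩ := exists_fst_marginal_eq_sum_mul_le (c := c ∘ Prod.swap)
    (fun w => hc w.swap) (fun w => hM w.swap) (fun w => hγ w.swap) hq (hmass.trans (hswap γ))
  refine ⟨γ' ∘ Prod.swap, fun z => hγ' z.swap, hγ'X, hγ'Y, ?_⟩
  calc ∑ z, γ' z.swap * c z = ∑ w, γ' w * c w.swap := (hswap _).trans (by simp)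
    _ ≤ _ := hγ'c
    _ = _ := by rw [hswap fun z => γ z * c z]; rfl

end Plans

section OptimalTransport

variable {X Y : Type*} [Fintype X] [Fintype Y] {c : X × Y → ℝ} {pX : X → ℝ} {pY : Y → ℝ}

lemma isCoupling_mul (hpX : IsPMF pX) (hpY : IsPMF pY) :
    IsCoupling pX pY (fun z => pX z.1 * pY z.2) := by
  refine ⟨⟨fun z => mul_nonneg (hpX.1 _) (hpY.1 _), ?_⟩, fun x => ?_, fun y => ?_⟩
  · simp [Fintype.sum_prod_type, ← mul_sum, hpX.2, hpY.2]
  · simp [← mul_sum, hpY.2]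
  · simp [← sum_mul, hpX.2]

lemma isCompact_setOf_isCoupling (pX : X → ℝ) (pY : Y → ℝ) :
    IsCompact {π : X × Y → ℝ | IsCoupling pX pY π} := by
  refine (isCompact_univ_pi fun _ => isCompact_Icc (a := (0 : ℝ)) (b := 1)).of_isClosed_subset
    ?_ fun π hπ z _ => ⟨hπ.1.1 z, hπ.1.2 ▸ single_le_sum (fun w _ => hπ.1.1 w) (mem_univ z)⟩
  simp only [IsCoupling, IsPMF, Set.ofPred_and, Set.ofPred_forall]
  exact ((isClosed_iInter fun z => isClosed_le continuous_const (continuous_apply z)).inter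
    (isClosed_eq (by fun_prop) continuous_const)).inter
    ((isClosed_iInter fun x => isClosed_eq (by fun_prop) continuous_const).inter
      (isClosed_iInter fun y => isClosed_eq (by fun_prop) continuous_const))

lemma convex_setOf_isCoupling_sum_mul_eq (pX : X → ℝ) (pY : Y → ℝ) (r : ℝ) :
    Convex ℝ {π : X × Y → ℝ | IsCoupling pX pY π ∧ ∑ z, π z * c z = r} := by
  rintro π ⟨⟨⟨hπ0, hπ1⟩, hπX, hπY⟩, hπc⟩ π' ⟨⟨⟨hπ'0, hπ'1⟩, hπ'X, hπ'Y⟩, hπ'c⟩ s t hs ht hst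
  refine ⟨⟨⟨fun z => ?_, ?_⟩, fun x => ?_, fun y => ?_⟩, ?_⟩
  · simp only [Pi.add_apply, Pi.smul_apply, smul_eq_mul]
    exact add_nonneg (mul_nonneg hs (hπ0 z)) (mul_nonneg ht (hπ'0 z))
  all_goals simp only [Pi.add_apply, Pi.smul_apply, smul_eq_mul, add_mul, mul_assoc,
    sum_add_distrib, ← mul_sum, hπ1, hπ'1, hπX, hπ'X, hπY, hπ'Y, hπc, hπ'c]
  all_goals rw [← add_mul, hst, one_mul]

lemma OTCost_le (hc : ∀ z, 0 ≤ c z) {π : X × Y → ℝ} (hπ : IsCoupling pX pY π) :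
    OTCost c pX pY ≤ ∑ z, π z * c z := by
  refine csInf_le ⟨0, ?_⟩ ⟨π, hπ, rfl⟩
  rintro r ⟨π', hπ', rfl⟩
  exact sum_nonneg fun z _ => mul_nonneg (hπ'.1.1 z) (hc z)

lemma exists_isCoupling_sum_mul_eq_OTCost (hc : ∀ z, 0 ≤ c z) (hpX : IsPMF pX)
    (hpY : IsPMF pY) : ∃ π, IsCoupling pX pY π ∧ ∑ z, π z * c z = OTCost c pX pY := by
  obtain ⟨π, hπ, hmin⟩ := (isCompact_setOf_isCoupling pX pY).exists_isMinOn
    ⟨_, isCoupling_mul hpX hpY⟩ (f := fun π => ∑ z, π z * c z) (by fun_prop)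
  refine ⟨π, hπ, le_antisymm ?_ (OTCost_le hc hπ)⟩
  refine le_csInf ⟨_, _, isCoupling_mul hpX hpY, rfl⟩ ?_
  rintro r ⟨π', hπ', rfl⟩
  exact hmin hπ'

lemma OTCost_le_sum_mul_add {M : ℝ} (hc : ∀ z, 0 ≤ c z) (hM : ∀ z, c z ≤ M)
    (hpX : IsPMF pX) (hpY : IsPMF pY) {γ : X × Y → ℝ} (hγ : ∀ z, 0 ≤ γ z)
    (hmass : ∑ z, γ z = 1) :
    OTCost c pX pY ≤ ∑ z, γ z * c z +
      M * (∑ x, (pX x - ∑ y, γ (x, y))⁺ + ∑ y, (pY y - ∑ x, γ (x, y))⁺) := by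
  obtain ⟨γ₁, hγ₁, hγ₁X, hγ₁Y, hγ₁c⟩ :=
    exists_fst_marginal_eq_sum_mul_le hc hM hγ hpX.1 (hpX.2.trans hmass.symm)
  have hmass₁ : ∑ z, γ₁ z = 1 := by simp only [Fintype.sum_prod_type, hγ₁X, hpX.2]
  obtain ⟨γ₂, hγ₂, hγ₂X, hγ₂Y, hγ₂c⟩ :=
    exists_snd_marginal_eq_sum_mul_le hc hM hγ₁ hpY.1 (hpY.2.trans hmass₁.symm)
  have hγ₂X' (x : X) : ∑ y, γ₂ (x, y) = pX x := (hγ₂X x).trans (hγ₁X x)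
  have hcoupling : IsCoupling pX pY γ₂ :=
    ⟨⟨hγ₂, by simp only [Fintype.sum_prod_type, hγ₂X', hpX.2]⟩, hγ₂X', hγ₂Y⟩
  simp only [hγ₁Y] at hγ₂c
  linarith [OTCost_le hc hcoupling]

def optimalSupport (c : X × Y → ℝ) (pX : X → ℝ) (pY : Y → ℝ) : Set (X × Y) :=
  {z | ∃ π, IsCoupling pX pY π ∧ (∑ w, π w * c w) = OTCost c pX pY ∧ π z ≠ 0}

lemma exists_optimal_pos_on_optimalSupport (hc : ∀ z, 0 ≤ c z) (hpX : IsPMF pX)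
    (hpY : IsPMF pY) :
    ∃ π, IsCoupling pX pY π ∧ ∑ z, π z * c z = OTCost c pX pY ∧
      ∀ z ∈ optimalSupport c pX pY, 0 < π z := by
  obtain ⟨π₀, hπ₀, hπ₀c⟩ := exists_isCoupling_sum_mul_eq_OTCost hc hpX hpY
  have hO (w : X × Y) : ∃ π, (IsCoupling pX pY π ∧ ∑ z, π z * c z = OTCost c pX pY) ∧
      (w ∈ optimalSupport c pX pY → 0 < π w) := by
    by_cases hw : w ∈ optimalSupport c pX pY
    · obtain ⟨π, hπ, hπc, hπw⟩ := hw
      exact ⟨π, ⟨hπ, hπc⟩, fun _ => (hπ.1.1 w).lt_of_ne' hπw⟩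
    · exact ⟨π₀, ⟨hπ₀, hπ₀c⟩, fun h => absurd h hw⟩
  choose π hπ hπpos using hO
  have hcard : (0 : ℝ) < Fintype.card (X × Y) := by
    have : (univ : Finset (X × Y)).Nonempty :=
      nonempty_of_sum_ne_zero (hπ₀.1.2.symm ▸ one_ne_zero)
    exact_mod_cast Fintype.card_pos_iff.2 this.to_type
  obtain ⟨hcoupling, hcost⟩ := (convex_setOf_isCoupling_sum_mul_eq pX pY _).sum_mem
    (t := univ) (w := fun _ => (Fintype.card (X × Y) : ℝ)⁻¹) (fun _ _ => by positivity)
    (by rw [sum_const, card_univ, nsmul_eq_mul, mul_inv_cancel₀ hcard.ne']) fun w _ => hπ w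
  refine ⟨_, hcoupling, hcost, fun z hz => ?_⟩
  simp only [Finset.sum_apply, Pi.smul_apply, smul_eq_mul]
  exact sum_pos' (fun w _ => mul_nonneg (by positivity) ((hπ w).1.1.1 z))
    ⟨z, mem_univ z, mul_pos (by positivity) (hπpos z hz)⟩

lemma neg_mul_le_sum_mul_of_neg_mem_optimalSupport {M : ℝ} (hc : ∀ z, 0 ≤ c z)
    (hM : ∀ z, c z ≤ M) (hpX : IsPMF pX) (hpY : IsPMF pY) {βX : X → ℝ} {βY : Y → ℝ}
    (hβX₀ : ∑ x, βX x = 0) {β : X × Y → ℝ} (hβX : ∀ x, ∑ y, β (x, y) = βX x)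
    (hβY : ∀ y, ∑ x, β (x, y) = βY y)
    (hneg : ∀ z, β z < 0 → z ∈ optimalSupport c pX pY) :
    -M * (∑ x, (βX x)⁻ + ∑ y, (βY y)⁻) ≤ ∑ z, β z * c z := by
  obtain ⟨π₀, hπ₀, hπ₀c, hπ₀pos⟩ := exists_optimal_pos_on_optimalSupport hc hpX hpY
  obtain ⟨t, ht, hnonneg⟩ :=
    exists_pos_forall_add_mul_nonneg hπ₀.1.1 fun z hz => hπ₀pos z (hneg z hz)
  have hmass : ∑ z, (π₀ z + t * β z) = 1 := by
    rw [sum_add_distrib, hπ₀.1.2, ← mul_sum, Fintype.sum_prod_type]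
    simp only [hβX, hβX₀, mul_zero, add_zero]
  have hnegPart (b : ℝ) : (-(t * b))⁺ = t * b⁻ := by
    rw [posPart_def, negPart_def, mul_max_of_nonneg _ _ ht.le, mul_zero, mul_neg]
  have h := OTCost_le_sum_mul_add hc hM hpX hpY hnonneg hmass
  simp only [sum_add_distrib, ← mul_sum, hπ₀.2.1, hπ₀.2.2, hβX, hβY, sub_add_cancel_left,
    hnegPart, add_mul, mul_assoc, hπ₀c] at h
  nlinarith

-- `θ βX βY = sInf (signedPlanCosts c S βX βY)`.
def signedPlanCosts (c : X × Y → ℝ) (S : Set (X × Y)) (βX : X → ℝ) (βY : Y → ℝ) : Set ℝ :=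
  {r | ∃ β : X × Y → ℝ, (∀ x, ∑ y, β (x, y) = βX x) ∧ (∀ y, ∑ x, β (x, y) = βY y) ∧
    (∀ z, β z < 0 → z ∈ S) ∧ r = ∑ z, β z * c z}

lemma bddBelow_signedPlanCosts (hc : ∀ z, 0 ≤ c z) (hpX : IsPMF pX) (hpY : IsPMF pY)
    {βX : X → ℝ} {βY : Y → ℝ} (hβX₀ : ∑ x, βX x = 0) :
    BddBelow (signedPlanCosts c (optimalSupport c pX pY) βX βY) := by
  refine ⟨-(∑ w, c w) * (∑ x, (βX x)⁻ + ∑ y, (βY y)⁻), ?_⟩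
  rintro r ⟨β, hβX, hβY, hneg, rfl⟩
  exact neg_mul_le_sum_mul_of_neg_mem_optimalSupport hc
    (fun z => single_le_sum (fun w _ => hc w) (mem_univ z)) hpX hpY hβX₀ hβX hβY hneg

lemma sub_div_mem_signedPlanCosts {qX : X → ℝ} {qY : Y → ℝ} {π₀ πQ : X × Y → ℝ}
    (hπ₀ : IsCoupling pX pY π₀) (hπ₀c : ∑ z, π₀ z * c z = OTCost c pX pY)
    (hπQ : IsCoupling qX qY πQ) {a : ℝ} (ha : 0 < a) :
    (∑ z, πQ z * c z - OTCost c pX pY) / a ∈ signedPlanCosts c (optimalSupport c pX pY)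
      (fun x => (qX x - pX x) / a) (fun y => (qY y - pY y) / a) := by
  refine ⟨fun z => (πQ z - π₀ z) / a, fun x => ?_, fun y => ?_, fun z hz => ?_, ?_⟩
  · rw [← sum_div, sum_sub_distrib, hπQ.2.1, hπ₀.2.1]
  · rw [← sum_div, sum_sub_distrib, hπQ.2.2, hπ₀.2.2]
  · refine ⟨π₀, hπ₀, hπ₀c, fun h => ?_⟩
    dsimp only at hz
    rw [h, sub_zero] at hz
    exact (div_nonneg (hπQ.1.1 z) ha.le).not_gt hz
  · rw [← hπ₀c, ← sum_sub_distrib, sum_div]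
    exact sum_congr rfl fun z _ => by ring

end OptimalTransport

/-- with `α = E(P_X, P_Y)`, `S` the union of supports of optimal couplings
of `(P_X, P_Y)` and `θ` defined via signed couplings with negative part supported on `S`,
for any pmfs `(Q_X, Q_Y)` and any `a > 0`, setting `β_X = (Q_X − P_X)/a`,
`β_Y = (Q_Y − P_Y)/a`, one has `(E(Q_X,Q_Y) − α)/a ≥ θ(β_X, β_Y)`. -/
theorem stmt11 {X Y : Type*} [Fintype X] [Fintype Y]
    (c : X × Y → ℝ) (hc : ∀ z, 0 ≤ c z)
    (pX : X → ℝ) (pY : Y → ℝ) (hpX : IsPMF pX) (hpY : IsPMF pY)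
    (S : Set (X × Y))
    (hS : S = {z | ∃ π, IsCoupling pX pY π ∧ (∑ w, π w * c w) = OTCost c pX pY ∧ π z ≠ 0})
    (θ : (X → ℝ) → (Y → ℝ) → ℝ)
    (hθ : ∀ βX βY, θ βX βY = sInf {r | ∃ β : X × Y → ℝ,
        (∀ x, ∑ y, β (x, y) = βX x) ∧ (∀ y, ∑ x, β (x, y) = βY y) ∧
        (∀ z, β z < 0 → z ∈ S) ∧ r = ∑ z, β z * c z})
    (qX : X → ℝ) (qY : Y → ℝ) (hqX : IsPMF qX) (hqY : IsPMF qY)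
    (a : ℝ) (ha : 0 < a) :
    θ (fun x => (qX x - pX x) / a) (fun y => (qY y - pY y) / a)
      ≤ (OTCost c qX qY - OTCost c pX pY) / a := by
  have hS' : S = optimalSupport c pX pY := hS
  obtain ⟨π₀, hπ₀, hπ₀c⟩ := exists_isCoupling_sum_mul_eq_OTCost hc hpX hpY
  have hmass : ∑ x, (qX x - pX x) / a = 0 := by
    rw [← sum_div, sum_sub_distrib, hqX.2, hpX.2, sub_self, zero_div]
  have hbdd := bddBelow_signedPlanCosts hc hpX hpY hmass (βY := fun y => (qY y - pY y) / a)
  rw [hθ, hS']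
  change sInf (signedPlanCosts c _ _ _) ≤ _
  rw [le_div_iff₀ ha, le_sub_iff_add_le]
  refine le_csInf ⟨_, _, isCoupling_mul hqX hqY, rfl⟩ ?_
  rintro r ⟨πQ, hπQ, rfl⟩
  have := (le_div_iff₀ ha).1 (csInf_le hbdd (sub_div_mem_signedPlanCosts hπ₀ hπ₀c hπQ ha))
  linarith
end
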